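/- In the modified AKV model, if ρ is an invariant state (ℒ_*(ρ) = 0) whose range is contained in V ∩ W_D^⊥, then ρ Z = (Γ_{2,−}/Γ_{2,+}) Z ρ, ρ·|ψ⟩⟨e_1| = 0 = |ψ⟩⟨e_1|·ρ, and ρ·|e_0⟩⟨ψ'| = 0 = |e_0⟩⟨ψ'|·ρ. -/

import Mathlib

noncomputable section

open ContinuousLinearMap Finset
open scoped InnerProductSpace

/-- The Hilbert space ℂ^(N+M+1) of the modified AKV model. -/
abbrev AKVSpace (N M : ℕ) := EuclideanSpace ℂ (Fin (N + M + 1))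

namespace AKV

variable (N M : ℕ)

/-- standard basis vector -/
def ket (i : Fin (N + M + 1)) : AKVSpace N M := EuclideanSpace.single i 1

/-- rank-one operator |u⟩⟨v| : x ↦ ⟪v, x⟫ • u -/
def ketbra (u v : AKVSpace N M) : AKVSpace N M →L[ℂ] AKVSpace N M :=
  (innerSL ℂ v).smulRight u

/-- indices 2,…,N of the second level -/
def idx2 : Finset (Fin (N + M + 1)) := univ.filter fun i => 2 ≤ (i : ℕ) ∧ (i : ℕ) ≤ N
/-- indices N+1,…,N+M of the third level -/
def idx3 : Finset (Fin (N + M + 1)) := univ.filter fun i => N + 1 ≤ (i : ℕ)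

/-- orthogonal projection onto span{e_0} -/
def P0 : AKVSpace N M →L[ℂ] AKVSpace N M := ketbra N M (ket N M 0) (ket N M 0)
/-- orthogonal projection onto span{e_1} -/
def P1 : AKVSpace N M →L[ℂ] AKVSpace N M := ketbra N M (ket N M 1) (ket N M 1)
/-- orthogonal projection onto span{e_2,…,e_N} -/
def P2 : AKVSpace N M →L[ℂ] AKVSpace N M := ∑ i ∈ idx2 N M, ketbra N M (ket N M i) (ket N M i)
/-- orthogonal projection onto span{e_{N+1},…,e_{N+M}} -/
def P3 : AKVSpace N M →L[ℂ] AKVSpace N M := ∑ i ∈ idx3 N M, ketbra N M (ket N M i) (ket N M i)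

/-- ψ = e_2 + ⋯ + e_N -/
def psi : AKVSpace N M := ∑ i ∈ idx2 N M, ket N M i
/-- ψ' = e_{N+1} + ⋯ + e_{N+M} -/
def psi' : AKVSpace N M := ∑ i ∈ idx3 N M, ket N M i

/-- |Z| = Z⋆Z -/
def absZ (Z : AKVSpace N M →L[ℂ] AKVSpace N M) : AKVSpace N M →L[ℂ] AKVSpace N M :=
  adjoint Z * Z

/-- hypotheses on the interference operator Z of the modified AKV model -/
def IsAKVZ (hM : 1 ≤ M) (Z : AKVSpace N M →L[ℂ] AKVSpace N M) : Prop :=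
  Z = P3 N M * Z * P2 N M ∧
  Z * adjoint Z = P3 N M ∧
  Z (ket N M ⟨N - 1, by omega⟩) = ((Real.sqrt ((N : ℝ) - 1))⁻¹ : ℂ) • psi' N M ∧
  adjoint Z (ket N M ⟨N + 1, by omega⟩) = ((Real.sqrt ((N : ℝ) - 1))⁻¹ : ℂ) • psi N M

/-- the five Kraus operators -/
def kraus (Γ1m Γ1p Γ2m Γ2p Γ3m : ℝ) (Z : AKVSpace N M →L[ℂ] AKVSpace N M) :
    Fin 5 → AKVSpace N M →L[ℂ] AKVSpace N M :=
  ![((Real.sqrt (2 * Γ1m) : ℝ) : ℂ) • ketbra N M (psi N M) (ket N M 1),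
    ((Real.sqrt (2 * ((N : ℝ) - 1) * Γ2m) : ℝ) : ℂ) • Z,
    ((Real.sqrt (2 * Γ3m) : ℝ) : ℂ) • ketbra N M (ket N M 0) (psi' N M),
    ((Real.sqrt (2 * Γ1p) : ℝ) : ℂ) • ketbra N M (ket N M 1) (psi N M),
    ((Real.sqrt (2 * ((N : ℝ) - 1) * Γ2p) : ℝ) : ℂ) • adjoint Z]

/-- the effective Hamiltonian -/
def Heff (γ1m γ1p γ2m γ2p γ3m : ℝ) (Z : AKVSpace N M →L[ℂ] AKVSpace N M) :
    AKVSpace N M →L[ℂ] AKVSpace N M :=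
  (γ1p : ℂ) • ketbra N M (psi N M) (psi N M)
    - (((N : ℂ) - 1) * (γ1m : ℂ)) • ketbra N M (ket N M 1) (ket N M 1)
    + (((N : ℂ) - 1) * (γ2p : ℂ)) • P3 N M
    - (((N : ℂ) - 1) * (γ2m : ℂ)) • absZ N M Z
    - (γ3m : ℂ) • ketbra N M (psi' N M) (psi' N M)

/-- the predual GKSL generator ℒ_* of the modified AKV model -/
def Lstar (Γ1m Γ1p Γ2m Γ2p Γ3m γ1m γ1p γ2m γ2p γ3m : ℝ)
    (Z ρ : AKVSpace N M →L[ℂ] AKVSpace N M) : AKVSpace N M →L[ℂ] AKVSpace N M :=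
  -Complex.I • (Heff N M γ1m γ1p γ2m γ2p γ3m Z * ρ - ρ * Heff N M γ1m γ1p γ2m γ2p γ3m Z)
    + ∑ k : Fin 5,
        (kraus N M Γ1m Γ1p Γ2m Γ2p Γ3m Z k * ρ * adjoint (kraus N M Γ1m Γ1p Γ2m Γ2p Γ3m Z k)
          - (1 / 2 : ℂ) • (adjoint (kraus N M Γ1m Γ1p Γ2m Γ2p Γ3m Z k) *
                kraus N M Γ1m Γ1p Γ2m Γ2p Γ3m Z k * ρ
              + ρ * (adjoint (kraus N M Γ1m Γ1p Γ2m Γ2p Γ3m Z k) *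
                kraus N M Γ1m Γ1p Γ2m Γ2p Γ3m Z k)))

/-- a state: positive semidefinite with trace one -/
def IsState (ρ : AKVSpace N M →L[ℂ] AKVSpace N M) : Prop :=
  ρ.IsPositive ∧ LinearMap.trace ℂ (AKVSpace N M) ↑ρ = 1

/-- the interaction-free subspace W_D -/
def WD (Z : AKVSpace N M →L[ℂ] AKVSpace N M) : Submodule ℂ (AKVSpace N M) :=
  (Submodule.span ℂ {ket N M 1, psi N M, psi' N M})ᗮ ⊓
    LinearMap.ker (Z : AKVSpace N M →ₗ[ℂ] AKVSpace N M) ⊓ LinearMap.ker (adjoint Z : AKVSpace N M →ₗ[ℂ] AKVSpace N M)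

/-- the subspace V = {e_0, e_1, ψ, ψ', Zψ, Z⋆ψ'}^⊥ -/
def Vsub (Z : AKVSpace N M →L[ℂ] AKVSpace N M) : Submodule ℂ (AKVSpace N M) :=
  (Submodule.span ℂ
    {ket N M 0, ket N M 1, psi N M, psi' N M, Z (psi N M), adjoint Z (psi' N M)})ᗮ

/-- Im|Z| ∩ {ψ, Z⋆ψ'}^⊥ -/
def subA (Z : AKVSpace N M →L[ℂ] AKVSpace N M) : Submodule ℂ (AKVSpace N M) :=
  LinearMap.range (absZ N M Z : AKVSpace N M →ₗ[ℂ] AKVSpace N M) ⊓ (Submodule.span ℂ {psi N M, adjoint Z (psi' N M)})ᗮ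

/-- ran P₃ ∩ {ψ', Zψ}^⊥ -/
def subB (Z : AKVSpace N M →L[ℂ] AKVSpace N M) : Submodule ℂ (AKVSpace N M) :=
  LinearMap.range (P3 N M : AKVSpace N M →ₗ[ℂ] AKVSpace N M) ⊓ (Submodule.span ℂ {psi' N M, Z (psi N M)})ᗮ

/-- the orthogonal projection onto a subspace, as an operator on the whole space -/
def projOp (U : Submodule ℂ (AKVSpace N M)) : AKVSpace N M →L[ℂ] AKVSpace N M :=
  U.subtypeL ∘L U.orthogonalProjectionOnto


section Lemmas
variable {N M : ℕ}

lemma ketbra_apply' (u v x : AKVSpace N M) : ketbra N M u v x = ⟪v, x⟫_ℂ • u := rfl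

lemma ketbra_zero_left (v : AKVSpace N M) : ketbra N M 0 v = 0 := by
  ext x; simp [ketbra_apply']

lemma ketbra_zero_right (u : AKVSpace N M) : ketbra N M u 0 = 0 := by
  ext x; simp [ketbra_apply']

lemma adjoint_ketbra (u v : AKVSpace N M) :
    adjoint (ketbra N M u v) = ketbra N M v u := by
  symm
  rw [eq_adjoint_iff]
  intro x y
  simp only [ketbra_apply', inner_smul_left, inner_smul_right, inner_conj_symm]
  ring

lemma mul_ketbra (T : AKVSpace N M →L[ℂ] AKVSpace N M) (u v : AKVSpace N M) :
    T * ketbra N M u v = ketbra N M (T u) v := by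
  ext x; simp [ketbra_apply', ContinuousLinearMap.mul_apply]

lemma ketbra_mul (T : AKVSpace N M →L[ℂ] AKVSpace N M) (u v : AKVSpace N M) :
    ketbra N M u v * T = ketbra N M u (adjoint T v) := by
  ext x
  simp [ketbra_apply', ContinuousLinearMap.mul_apply, adjoint_inner_left]

lemma ketbra_mul_ketbra (u v u' v' : AKVSpace N M) :
    ketbra N M u v * ketbra N M u' v' = ⟪v, u'⟫_ℂ • ketbra N M u v' := by
  ext x
  simp only [ketbra_apply', ContinuousLinearMap.mul_apply, ContinuousLinearMap.smul_apply,
    inner_smul_right, smul_smul]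
  ring_nf

lemma adjoint_smul' (c : ℂ) (T : AKVSpace N M →L[ℂ] AKVSpace N M) :
    adjoint (c • T) = (starRingEnd ℂ c) • adjoint T := by
  rw [← star_eq_adjoint, ← star_eq_adjoint, star_smul]
  rfl

lemma adjoint_mul' (S T : AKVSpace N M →L[ℂ] AKVSpace N M) :
    adjoint (S * T) = adjoint T * adjoint S := by
  rw [← star_eq_adjoint, ← star_eq_adjoint, ← star_eq_adjoint, star_mul]

lemma inner_ket_ket (i j : Fin (N+M+1)) :
    ⟪ket N M i, ket N M j⟫_ℂ = if j = i then 1 else 0 := by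
  simp [ket, EuclideanSpace.inner_single_left, EuclideanSpace.single_apply]
  exact if_congr eq_comm rfl rfl

lemma ext_ket {T S : AKVSpace N M →L[ℂ] AKVSpace N M}
    (h : ∀ i, T (ket N M i) = S (ket N M i)) : T = S := by
  apply ContinuousLinearMap.coe_injective
  apply Module.Basis.ext (EuclideanSpace.basisFun (Fin (N+M+1)) ℂ).toBasis
  intro i
  simpa [ket] using h i

lemma mem_idx2 {i : Fin (N+M+1)} : i ∈ idx2 N M ↔ 2 ≤ (i : ℕ) ∧ (i : ℕ) ≤ N := by
  simp [idx2]

lemma mem_idx3 {i : Fin (N+M+1)} : i ∈ idx3 N M ↔ N + 1 ≤ (i : ℕ) := by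
  simp [idx3]

lemma P2_ket (j : Fin (N+M+1)) :
    P2 N M (ket N M j) = if j ∈ idx2 N M then ket N M j else 0 := by
  simp only [P2, ContinuousLinearMap.sum_apply, ketbra_apply', inner_ket_ket, ite_smul,
    one_smul, zero_smul, Finset.sum_ite_eq]

lemma P3_ket (j : Fin (N+M+1)) :
    P3 N M (ket N M j) = if j ∈ idx3 N M then ket N M j else 0 := by
  simp only [P3, ContinuousLinearMap.sum_apply, ketbra_apply', inner_ket_ket, ite_smul,
    one_smul, zero_smul, Finset.sum_ite_eq]

lemma P3_mul_P3 : P3 N M * P3 N M = P3 N M := by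
  apply ext_ket; intro j
  by_cases h : j ∈ idx3 N M <;>
    simp [ContinuousLinearMap.mul_apply, P3_ket, h]

lemma P2_mul_P2 : P2 N M * P2 N M = P2 N M := by
  apply ext_ket; intro j
  by_cases h : j ∈ idx2 N M <;>
    simp [ContinuousLinearMap.mul_apply, P2_ket, h]

lemma P2_mul_P3 : P2 N M * P3 N M = 0 := by
  apply ext_ket; intro j
  by_cases h : j ∈ idx3 N M
  · have h2 : j ∉ idx2 N M := by
      rw [mem_idx3] at h; rw [mem_idx2]; omega
    simp [ContinuousLinearMap.mul_apply, P3_ket, P2_ket, h, h2]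
  · simp [ContinuousLinearMap.mul_apply, P3_ket, h]

lemma adjoint_P3 : adjoint (P3 N M) = P3 N M := by
  rw [← star_eq_adjoint, P3, star_sum]
  exact Finset.sum_congr rfl fun i _ => by rw [star_eq_adjoint, adjoint_ketbra]

lemma P3_psi' : P3 N M (psi' N M) = psi' N M := by
  rw [psi', map_sum]
  exact Finset.sum_congr rfl fun i hi => by rw [P3_ket, if_pos hi]

lemma P2_psi : P2 N M (psi N M) = psi N M := by
  rw [psi, map_sum]
  exact Finset.sum_congr rfl fun i hi => by rw [P2_ket, if_pos hi]

lemma P3_psi : P3 N M (psi N M) = 0 := by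
  rw [psi, map_sum]
  apply Finset.sum_eq_zero
  intro i hi
  rw [P3_ket, if_neg]
  rw [mem_idx2] at hi; rw [mem_idx3]; omega

lemma P2_psi' : P2 N M (psi' N M) = 0 := by
  rw [psi', map_sum]
  apply Finset.sum_eq_zero
  intro i hi
  rw [P2_ket, if_neg]
  rw [mem_idx3] at hi; rw [mem_idx2]; omega

lemma P2_ket1 : P2 N M (ket N M 1) = 0 := by
  rw [P2_ket, if_neg]
  rw [mem_idx2]
  have : ((1 : Fin (N+M+1)) : ℕ) ≤ 1 := by
    rw [Fin.val_one']; exact Nat.mod_le _ _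
  omega

lemma P3_ket1 (hN : 1 ≤ N) : P3 N M (ket N M 1) = 0 := by
  rw [P3_ket, if_neg]
  rw [mem_idx3]
  have : ((1 : Fin (N+M+1)) : ℕ) ≤ 1 := by
    rw [Fin.val_one']; exact Nat.mod_le _ _
  omega

lemma P2_ket0 : P2 N M (ket N M 0) = 0 := by
  rw [P2_ket, if_neg]
  rw [mem_idx2]
  simp

lemma P3_ket0 : P3 N M (ket N M 0) = 0 := by
  rw [P3_ket, if_neg]
  rw [mem_idx3]
  simp

end Lemmas

set_option maxHeartbeats 4000000 in
set_option synthInstance.maxHeartbeats 1000000 in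
/-- In the modified AKV model, every invariant state supported in `V ∩ W_D^⊥` is a detailed
balance state: it satisfies `ρZ = (Γ₂₋/Γ₂₊) Zρ` and annihilates the other two Kraus operators
on both sides. -/
theorem invariant_states_detailed_balance
    (N M : ℕ) (hN : 3 ≤ N) (hM1 : 1 ≤ M) (hM2 : M ≤ N - 1)
    (Γ1m Γ1p Γ2m Γ2p Γ3m γ1m γ1p γ2m γ2p γ3m : ℝ)
    (hΓ : 0 < Γ1m ∧ 0 < Γ1p ∧ 0 < Γ2m ∧ 0 < Γ2p ∧ 0 < Γ3m)
    (hγ : 0 < γ1m ∧ 0 < γ1p ∧ 0 < γ2m ∧ 0 < γ2p ∧ 0 < γ3m)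
    (Z : AKVSpace N M →L[ℂ] AKVSpace N M) (hZ : IsAKVZ N M hM1 Z)
    (ρ : AKVSpace N M →L[ℂ] AKVSpace N M) (hρ : IsState N M ρ)
    (hinv : Lstar N M Γ1m Γ1p Γ2m Γ2p Γ3m γ1m γ1p γ2m γ2p γ3m Z ρ = 0)
    (hrange : LinearMap.range (ρ : AKVSpace N M →ₗ[ℂ] AKVSpace N M) ≤ Vsub N M Z ⊓ (WD N M Z)ᗮ) :
    ρ * Z = ((Γ2m / Γ2p : ℝ) : ℂ) • (Z * ρ) ∧
    ρ * ketbra N M (psi N M) (ket N M 1) = 0 ∧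
    ketbra N M (psi N M) (ket N M 1) * ρ = 0 ∧
    ρ * ketbra N M (ket N M 0) (psi' N M) = 0 ∧
    ketbra N M (ket N M 0) (psi' N M) * ρ = 0 := by

  obtain ⟨hΓ1m, hΓ1p, hΓ2m, hΓ2p, hΓ3m⟩ := hΓ
  obtain ⟨hz1, hz2, hz3, hz4⟩ := hZ
  -- operator algebra
  have hpp : P3 N M * P3 N M = P3 N M := P3_mul_P3
  have hP2P2 : P2 N M * P2 N M = P2 N M := P2_mul_P2
  have hP2p : P2 N M * P3 N M = 0 := P2_mul_P3
  have hpadj : adjoint (P3 N M) = P3 N M := adjoint_P3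
  have hpZ : P3 N M * Z = Z := by
    conv_lhs => rw [hz1]
    rw [← mul_assoc, ← mul_assoc, hpp]
    exact hz1.symm
  have hZP2 : Z * P2 N M = Z := by
    conv_lhs => rw [hz1]
    rw [mul_assoc, hP2P2]
    exact hz1.symm
  have hZp : Z * P3 N M = 0 := by
    conv_lhs => rw [← hZP2]
    rw [mul_assoc, hP2p, mul_zero]
  have hZsp : adjoint Z * P3 N M = adjoint Z := by
    have h := congrArg adjoint hpZ
    rwa [adjoint_mul', hpadj] at h
  have hpZs : P3 N M * adjoint Z = 0 := by
    have h := congrArg adjoint hZp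
    rwa [adjoint_mul', hpadj, map_zero] at h
  have hZZ : Z * Z = 0 := by
    nth_rw 2 [← hpZ]
    rw [← mul_assoc, hZp, zero_mul]
  have hZsZs : adjoint Z * adjoint Z = 0 := by
    have h := congrArg adjoint hZZ
    rwa [adjoint_mul', map_zero] at h
  have hZsadj : adjoint (adjoint Z) = Z := adjoint_adjoint Z
  have hZq : Z * (adjoint Z * Z) = Z := by rw [← mul_assoc, hz2, hpZ]
  have hqZs : (adjoint Z * Z) * adjoint Z = adjoint Z := by rw [mul_assoc, hz2, hZsp]
  have hqZ : (adjoint Z * Z) * Z = 0 := by rw [mul_assoc, hZZ, mul_zero]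
  have hZsq : adjoint Z * (adjoint Z * Z) = 0 := by rw [← mul_assoc, hZsZs, zero_mul]
  have hqq : (adjoint Z * Z) * (adjoint Z * Z) = adjoint Z * Z := by
    rw [mul_assoc, ← mul_assoc Z, hz2, hpZ]
  have hpq : P3 N M * (adjoint Z * Z) = 0 := by rw [← mul_assoc, hpZs, zero_mul]
  have hqp : (adjoint Z * Z) * P3 N M = 0 := by rw [mul_assoc, hZp, mul_zero]
  have hqadj : adjoint (adjoint Z * Z) = adjoint Z * Z := by
    rw [adjoint_mul', hZsadj]
  -- vector facts
  have hpe1 : P3 N M (ket N M 1) = 0 := P3_ket1 (by omega)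
  have hZe1 : Z (ket N M 1) = 0 := by
    rw [← hZP2, ContinuousLinearMap.mul_apply, P2_ket1, map_zero]
  have hqe1 : (adjoint Z * Z) (ket N M 1) = 0 := by
    rw [ContinuousLinearMap.mul_apply, hZe1, map_zero]
  have hppsi : P3 N M (psi N M) = 0 := P3_psi
  have hppsi' : P3 N M (psi' N M) = psi' N M := P3_psi'
  have hZpsi' : Z (psi' N M) = 0 := by
    rw [← hZP2, ContinuousLinearMap.mul_apply, P2_psi', map_zero]
  have hqpsi' : (adjoint Z * Z) (psi' N M) = 0 := by
    rw [ContinuousLinearMap.mul_apply, hZpsi', map_zero]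
  have hNr : (0:ℝ) < (N:ℝ) - 1 := by
    have : (3:ℝ) ≤ (N:ℝ) := by exact_mod_cast hN
    linarith
  have hsne : ((Real.sqrt ((N:ℝ) - 1) : ℝ) : ℂ) ≠ 0 := by
    simp only [ne_eq, Complex.ofReal_eq_zero]
    positivity
  have hpsiZ : psi N M = ((Real.sqrt ((N:ℝ) - 1) : ℝ) : ℂ) • adjoint Z (ket N M ⟨N + 1, by omega⟩) := by
    rw [hz4, smul_smul, mul_inv_cancel₀ hsne, one_smul]
  have hqpsi : (adjoint Z * Z) (psi N M) = psi N M := by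
    conv_lhs => rw [hpsiZ]
    rw [map_smul, ← ContinuousLinearMap.mul_apply, hqZs, ← hpsiZ]
  -- state facts
  have hρadj : adjoint ρ = ρ := isSelfAdjoint_iff'.mp (ContinuousLinearMap.isSelfAdjoint_iff_isSymmetric.mpr hρ.1.1)
  have hmem : ∀ x, ρ x ∈ Vsub N M Z ⊓ (WD N M Z)ᗮ := by
    intro x
    exact hrange (LinearMap.mem_range_self _ x)
  have hinnerV : ∀ v ∈ ({ket N M 0, ket N M 1, psi N M, psi' N M, Z (psi N M),
      adjoint Z (psi' N M)} : Set (AKVSpace N M)), ∀ x, ⟪v, ρ x⟫_ℂ = 0 := by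
    intro v hv x
    have h1 := (Submodule.mem_inf.mp (hmem x)).1
    exact (Submodule.mem_orthogonal _ _).mp h1 v (Submodule.subset_span hv)
  have hkillvec : ∀ v : AKVSpace N M, (∀ x, ⟪v, ρ x⟫_ℂ = 0) → ρ v = 0 := by
    intro v hv
    apply ext_inner_right ℂ
    intro w
    rw [inner_zero_left, ← hρadj, adjoint_inner_left]
    exact hv w
  have hρe0 : ρ (ket N M 0) = 0 := hkillvec _ (hinnerV _ (by simp))
  have hρe1 : ρ (ket N M 1) = 0 := hkillvec _ (hinnerV _ (by simp))
  have hρpsi : ρ (psi N M) = 0 := hkillvec _ (hinnerV _ (by simp))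
  have hρpsi' : ρ (psi' N M) = 0 := hkillvec _ (hinnerV _ (by simp))
  -- inner product transfer for selfadjoint operators
  have hinq : ∀ u z : AKVSpace N M, ⟪u, (adjoint Z * Z) z⟫_ℂ = ⟪(adjoint Z * Z) u, z⟫_ℂ := by
    intro u z
    conv_lhs => rw [← adjoint_inner_left (adjoint Z * Z) z u, hqadj]
  have hinp : ∀ u z : AKVSpace N M, ⟪u, P3 N M z⟫_ℂ = ⟪P3 N M u, z⟫_ℂ := by
    intro u z
    conv_lhs => rw [← adjoint_inner_left (P3 N M) z u, hpadj]
  -- support of ρ is contained in ran q ⊕ ran p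
  have hsum : (adjoint Z * Z + P3 N M) * ρ = ρ := by
    ext x
    have hyV := hinnerV
    set y := ρ x with hy
    set w := y - (adjoint Z * Z) y - P3 N M y with hw
    have hqw : (adjoint Z * Z) w = 0 := by
      rw [hw, map_sub, map_sub, ← ContinuousLinearMap.mul_apply (adjoint Z * Z) (adjoint Z * Z),
        hqq, ← ContinuousLinearMap.mul_apply (adjoint Z * Z) (P3 N M), hqp]
      simp
    have hpw : P3 N M w = 0 := by
      rw [hw, map_sub, map_sub, ← ContinuousLinearMap.mul_apply (P3 N M) (adjoint Z * Z),
        hpq, ← ContinuousLinearMap.mul_apply (P3 N M) (P3 N M), hpp]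
      simp
    have hZw : Z w = 0 := by
      rw [hw, map_sub, map_sub, ← ContinuousLinearMap.mul_apply Z (adjoint Z * Z),
        hZq, ← ContinuousLinearMap.mul_apply Z (P3 N M), hZp]
      simp
    have hZsw : adjoint Z w = 0 := by
      rw [hw, map_sub, map_sub, ← ContinuousLinearMap.mul_apply (adjoint Z) (adjoint Z * Z),
        hZsq, ← ContinuousLinearMap.mul_apply (adjoint Z) (P3 N M), hZsp]
      simp
    have hwWD : w ∈ WD N M Z := by
      refine Submodule.mem_inf.mpr ⟨Submodule.mem_inf.mpr ⟨?_, ?_⟩, ?_⟩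
      · rw [Submodule.mem_orthogonal]
        intro u hu
        induction hu using Submodule.span_induction with
        | mem v hv =>
          rcases hv with rfl | rfl | rfl
          · -- v = ket 1
            rw [hw]
            simp only [inner_sub_right, hinq, hinp, hqe1, hpe1, inner_zero_left]
            have := hinnerV (ket N M 1) (by simp) x
            rw [← hy] at this
            rw [this]; ring
          · -- v = psi
            rw [hw]
            simp only [inner_sub_right, hinq, hinp, hqpsi, hppsi, inner_zero_left]
            ring
          · -- v = psi'
            rw [hw]
            simp only [inner_sub_right, hinq, hinp, hqpsi', hppsi', inner_zero_left]
            ring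
        | zero => simp
        | add a b _ _ ha hb => simp [inner_add_left, ha, hb]
        | smul c a _ ha => simp [inner_smul_left, ha]
      · simp only [LinearMap.mem_ker, ContinuousLinearMap.coe_coe]
        exact hZw
      · simp only [LinearMap.mem_ker, ContinuousLinearMap.coe_coe]
        exact hZsw
    have hwy : ⟪w, y⟫_ℂ = 0 := by
      have h2 := (Submodule.mem_inf.mp (hmem x)).2
      rw [← hy] at h2
      exact (Submodule.mem_orthogonal _ _).mp h2 w hwWD
    have hww : ⟪w, w⟫_ℂ = 0 := by
      nth_rw 2 [hw]
      rw [inner_sub_right, inner_sub_right, hinq, hinp, hqw, hpw, inner_zero_left, hwy]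
      ring
    have hw0 : w = 0 := inner_self_eq_zero.mp hww
    rw [hw, sub_sub, sub_eq_zero] at hw0
    rw [ContinuousLinearMap.mul_apply, ContinuousLinearMap.add_apply, ← hy, ← hw0]
  have hsum' : ρ * (adjoint Z * Z + P3 N M) = ρ := by
    have h := congrArg adjoint hsum
    rwa [adjoint_mul', map_add, hqadj, hpadj, hρadj] at h
  -- rank-one kill rules
  have hKmulρ : ∀ u v : AKVSpace N M, ρ v = 0 → ketbra N M u v * ρ = 0 := by
    intro u v h
    rw [ketbra_mul, hρadj, h, ketbra_zero_right]
  have hρmulK : ∀ u v : AKVSpace N M, ρ u = 0 → ρ * ketbra N M u v = 0 := by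
    intro u v h
    rw [mul_ketbra, h, ketbra_zero_left]
  have km : ∀ u v : AKVSpace N M, ρ v = 0 → ∀ X, ketbra N M u v * (ρ * X) = 0 := by
    intro u v h X
    rw [← mul_assoc, hKmulρ u v h, zero_mul]
  have mk : ∀ u v : AKVSpace N M, ρ u = 0 → ∀ X, ρ * (ketbra N M u v * X) = 0 := by
    intro u v h X
    rw [← mul_assoc, hρmulK u v h, zero_mul]
  simp only [Lstar, Heff, absZ, kraus, Fin.sum_univ_five, Matrix.cons_val_zero,
    Matrix.cons_val_one, Matrix.head_cons, Matrix.cons_val_two, Matrix.tail_cons,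
    Matrix.cons_val_three, Matrix.cons_val_four,
    adjoint_smul', Complex.conj_ofReal, adjoint_ketbra, adjoint_adjoint] at hinv
  set q : AKVSpace N M →L[ℂ] AKVSpace N M := adjoint Z * Z with hqdef
  have mm : ∀ {A B C : AKVSpace N M →L[ℂ] AKVSpace N M}, A * B = C →
      ∀ X : AKVSpace N M →L[ℂ] AKVSpace N M, A * (B * X) = C * X := by
    intro A B C h X
    rw [← mul_assoc, h]
  have h2m0 : (0:ℝ) ≤ 2 * ((N:ℝ) - 1) * Γ2m := by nlinarith
  have h2p0 : (0:ℝ) ≤ 2 * ((N:ℝ) - 1) * Γ2p := by nlinarith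
  have hsq2m : ((Real.sqrt (2 * ((N:ℝ) - 1) * Γ2m) : ℝ) : ℂ) *
      ((Real.sqrt (2 * ((N:ℝ) - 1) * Γ2m) : ℝ) : ℂ) = ((2 * ((N:ℝ) - 1) * Γ2m : ℝ) : ℂ) := by
    rw [← Complex.ofReal_mul, Real.mul_self_sqrt h2m0]
  have hsq2p : ((Real.sqrt (2 * ((N:ℝ) - 1) * Γ2p) : ℝ) : ℂ) *
      ((Real.sqrt (2 * ((N:ℝ) - 1) * Γ2p) : ℝ) : ℂ) = ((2 * ((N:ℝ) - 1) * Γ2p : ℝ) : ℂ) := by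
    rw [← Complex.ofReal_mul, Real.mul_self_sqrt h2p0]
  have Omul_add : ∀ a b c : AKVSpace N M →L[ℂ] AKVSpace N M, a * (b + c) = a * b + a * c :=
    fun a b c => mul_add a b c
  have Oadd_mul : ∀ a b c : AKVSpace N M →L[ℂ] AKVSpace N M, (a + b) * c = a * c + b * c :=
    fun a b c => add_mul a b c
  have Omul_sub : ∀ a b c : AKVSpace N M →L[ℂ] AKVSpace N M, a * (b - c) = a * b - a * c :=
    fun a b c => mul_sub a b c
  have Osub_mul : ∀ a b c : AKVSpace N M →L[ℂ] AKVSpace N M, (a - b) * c = a * c - b * c :=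
    fun a b c => sub_mul a b c
  have Oneg_mul : ∀ a b : AKVSpace N M →L[ℂ] AKVSpace N M, (-a) * b = -(a * b) :=
    fun a b => neg_mul a b
  have Omul_neg : ∀ a b : AKVSpace N M →L[ℂ] AKVSpace N M, a * (-b) = -(a * b) :=
    fun a b => mul_neg a b
  have Osmul_mul : ∀ (c : ℂ) (a b : AKVSpace N M →L[ℂ] AKVSpace N M),
      (c • a) * b = c • (a * b) := fun c a b => smul_mul_assoc c a b
  have Omul_smul : ∀ (c : ℂ) (a b : AKVSpace N M →L[ℂ] AKVSpace N M),
      a * (c • b) = c • (a * b) := fun c a b => mul_smul_comm c a b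
  have Omul_assoc : ∀ a b c : AKVSpace N M →L[ℂ] AKVSpace N M, a * b * c = a * (b * c) :=
    fun a b c => mul_assoc a b c
  have Osmul_add : ∀ (c : ℂ) (a b : AKVSpace N M →L[ℂ] AKVSpace N M),
      c • (a + b) = c • a + c • b := fun c a b => smul_add c a b
  have Osmul_sub : ∀ (c : ℂ) (a b : AKVSpace N M →L[ℂ] AKVSpace N M),
      c • (a - b) = c • a - c • b := fun c a b => smul_sub c a b
  have Osmul_smul : ∀ (c d : ℂ) (a : AKVSpace N M →L[ℂ] AKVSpace N M),
      c • (d • a) = (c * d) • a := fun c d a => smul_smul c d a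
  have Oneg_smul : ∀ (c : ℂ) (a : AKVSpace N M →L[ℂ] AKVSpace N M),
      (-c) • a = -(c • a) := fun c a => neg_smul c a
  have Osmul_neg : ∀ (c : ℂ) (a : AKVSpace N M →L[ℂ] AKVSpace N M),
      c • (-a) = -(c • a) := fun c a => smul_neg c a
  have hCeq := congrArg (fun T => q * T * P3 N M) hinv
  simp only [Omul_add, Oadd_mul, Omul_sub, Osub_mul, Oneg_mul, Omul_neg, Osmul_mul,
    Omul_smul, Omul_assoc, Osmul_add, Osmul_sub, Osmul_smul, Oneg_smul, Osmul_neg,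
    hsq2m, hsq2p, ← hqdef,
    hqq, hqp, hpq, hpp, hqZ, hqZs, hZq, hZp, hpZ, hpZs, hZsp, hZsq, hZZ, hZsZs, hz2,
    mm hqq, mm hqp, mm hpq, mm hpp, mm hqZ, mm hqZs, mm hZq, mm hZp, mm hpZ, mm hpZs,
    mm hZsp, mm hZsq, mm hZZ, mm hZsZs, mm hz2,
    hKmulρ _ _ hρe1, hKmulρ _ _ hρpsi, hKmulρ _ _ hρpsi', hKmulρ _ _ hρe0,
    hρmulK _ _ hρe1, hρmulK _ _ hρpsi, hρmulK _ _ hρpsi', hρmulK _ _ hρe0,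
    km _ _ hρe1, km _ _ hρpsi, km _ _ hρpsi', km _ _ hρe0,
    mk _ _ hρe1, mk _ _ hρpsi, mk _ _ hρpsi', mk _ _ hρe0,
    mul_zero, zero_mul, smul_zero, zero_smul, add_zero, zero_add, sub_zero, zero_sub,
    neg_zero, neg_neg, sub_self] at hCeq
  push_cast at hCeq
  have hA : (Complex.I * ((N:ℂ) - 1) * (↑γ2m + ↑γ2p) - ((N:ℂ) - 1) * (↑Γ2m + ↑Γ2p)) •
      (adjoint Z * (Z * (ρ * P3 N M))) = 0 := by
    rw [← hCeq]; simp only [hqdef, mul_assoc]; module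
  have hκ : (Complex.I * ((N:ℂ) - 1) * (↑γ2m + ↑γ2p) - ((N:ℂ) - 1) * (↑Γ2m + ↑Γ2p) : ℂ) ≠ 0 := by
    intro h0
    have him := congrArg Complex.im h0
    simp [Complex.mul_im, Complex.mul_re, Complex.add_im, Complex.add_re, Complex.sub_im] at him
    rcases him with h | h
    · linarith [hNr]
    · linarith [hγ.2.2.1, hγ.2.2.2.1]
  have hC : q * (ρ * P3 N M) = 0 := by
    rw [hqdef, mul_assoc]
    exact (smul_eq_zero.mp hA).resolve_left hκ
  have hBeq := congrArg (fun T => P3 N M * T * P3 N M) hinv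
  simp only [Omul_add, Oadd_mul, Omul_sub, Osub_mul, Oneg_mul, Omul_neg, Osmul_mul,
    Omul_smul, Omul_assoc, Osmul_add, Osmul_sub, Osmul_smul, Oneg_smul, Osmul_neg,
    hsq2m, hsq2p, ← hqdef,
    hqq, hqp, hpq, hpp, hqZ, hqZs, hZq, hZp, hpZ, hpZs, hZsp, hZsq, hZZ, hZsZs, hz2,
    mm hqq, mm hqp, mm hpq, mm hpp, mm hqZ, mm hqZs, mm hZq, mm hZp, mm hpZ, mm hpZs,
    mm hZsp, mm hZsq, mm hZZ, mm hZsZs, mm hz2,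
    hKmulρ _ _ hρe1, hKmulρ _ _ hρpsi, hKmulρ _ _ hρpsi', hKmulρ _ _ hρe0,
    hρmulK _ _ hρe1, hρmulK _ _ hρpsi, hρmulK _ _ hρpsi', hρmulK _ _ hρe0,
    km _ _ hρe1, km _ _ hρpsi, km _ _ hρpsi', km _ _ hρe0,
    mk _ _ hρe1, mk _ _ hρpsi, mk _ _ hρpsi', mk _ _ hρe0,
    mul_zero, zero_mul, smul_zero, zero_smul, add_zero, zero_add, sub_zero, zero_sub,
    neg_zero, neg_neg, sub_self] at hBeq
  push_cast at hBeq
  have hPB : (2 * ((N:ℂ) - 1) * ↑Γ2m) • (Z * (ρ * adjoint Z)) =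
      (2 * ((N:ℂ) - 1) * ↑Γ2p) • (P3 N M * (ρ * P3 N M)) := by
    rw [← sub_eq_zero, ← hBeq]
    module
  have hρp : ρ * P3 N M = P3 N M * (ρ * P3 N M) := by
    conv_lhs => rw [← hsum]
    rw [Omul_assoc, Oadd_mul, hC, zero_add]
  have hρZ : ρ * Z = (P3 N M * (ρ * P3 N M)) * Z := by
    conv_lhs => rw [← hpZ, ← mul_assoc, hρp]
  have hρq : ρ * q = ρ - ρ * P3 N M := by
    rw [eq_sub_iff_add_eq, ← Omul_add, hsum']
  have hfin : (2 * ((N:ℂ) - 1) * ↑Γ2p) • (ρ * Z) =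
      (2 * ((N:ℂ) - 1) * ↑Γ2m) • (Z * ρ) := by
    rw [hρZ, ← Osmul_mul, ← hPB, Osmul_mul]
    congr 1
    rw [Omul_assoc, Omul_assoc, ← hqdef, hρq, Omul_sub, hρp,
      ← mul_assoc Z (P3 N M), hZp, zero_mul, sub_zero]
  have hN1 : ((N:ℂ) - 1) ≠ 0 := by
    intro h0
    have := congrArg Complex.re h0
    simp at this
    nlinarith [hNr]
  have hbne : (2 * ((N:ℂ) - 1) * ↑Γ2p) ≠ 0 := by
    apply mul_ne_zero (mul_ne_zero two_ne_zero hN1)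
    exact_mod_cast ne_of_gt hΓ2p
  refine ⟨?_, hρmulK _ _ hρpsi, hKmulρ _ _ hρe1, hρmulK _ _ hρe0, hKmulρ _ _ hρpsi'⟩
  calc ρ * Z = ((2 * ((N:ℂ) - 1) * ↑Γ2p)⁻¹ * (2 * ((N:ℂ) - 1) * ↑Γ2p)) • (ρ * Z) := by
        rw [inv_mul_cancel₀ hbne, one_smul]
    _ = (2 * ((N:ℂ) - 1) * ↑Γ2p)⁻¹ • ((2 * ((N:ℂ) - 1) * ↑Γ2m) • (Z * ρ)) := by
        rw [← smul_smul, hfin]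
    _ = ((Γ2m / Γ2p : ℝ) : ℂ) • (Z * ρ) := by
        rw [smul_smul]
        congr 1
        have hΓ2pC : (Γ2p : ℂ) ≠ 0 := by exact_mod_cast ne_of_gt hΓ2p
        push_cast
        field_simp







end AKV
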